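/- For n ≥ 4 set Y_n = n·Σ_{j=2}^{n−2} (2n−2j−1)!!·(2j−1)!!. Then Y_n/X_n → 0 as n → ∞. -/
import Mathlib


/-- The sequence `X_n` counting equivalence classes of circular planar electrical networks:
`X_1 = 1` and, for `n ≥ 2`,
`X_n = 2(n-1) X_{n-1} + ∑_{j=2}^{n-2} (j-1) X_j X_{n-j}` (the sum being empty for `n ≤ 3`;
here it is written over the attached index set to establish termination). -/
def X : ℕ → ℕ
  | 0 => 1
  | 1 => 1
  | n + 2 =>
      2 * (n + 1) * X (n + 1) +
        ∑ j ∈ (Finset.Icc 2 n).attach, (j.1 - 1) * X j.1 * X (n + 2 - j.1)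
decreasing_by
  · exact Nat.lt_succ_self (n + 1)
  · have := j.2; rw [Finset.mem_Icc] at this; omega
  · have := j.2; rw [Finset.mem_Icc] at this; omega

/-- `Y_n = n · ∑_{j=2}^{n-2} (2n-2j-1)!!·(2j-1)!!`, an overcount of the remaining
non-full wiring diagrams of order `n`. -/
def Y (n : ℕ) : ℕ :=
  n * ∑ j ∈ Finset.Icc 2 (n - 2),
    Nat.doubleFactorial (2 * n - 2 * j - 1) * Nat.doubleFactorial (2 * j - 1)

open Nat in
lemma dfkey : ∀ a b : ℕ, (2*a+1)‼ * (2*b+1)‼ * ((a+b+2).choose (a+1)) ≤ (2*(a+b)+3)‼ := by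
  intro a
  induction a with
  | zero =>
    intro b
    have h2 : (0+b+2).choose (0+1) = b+2 := by simpa using Nat.choose_one_right (b+2)
    have h3 : (2*(0+b)+3)‼ = (2*b+3) * (2*b+1)‼ := by
      rw [show 2*(0+b)+3 = (2*b+1)+2 by ring, Nat.doubleFactorial_add_two]
    rw [show (2*0+1)‼ = 1 from rfl, h2, h3, one_mul]
    calc (2*b+1)‼ * (b+2) ≤ (2*b+1)‼ * (2*b+3) := Nat.mul_le_mul_left _ (by omega)
      _ = (2*b+3) * (2*b+1)‼ := mul_comm _ _
  | succ a iha =>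
    intro b
    induction b with
    | zero =>
      have h2 : (a+1+0+2).choose (a+1+1) = a+3 := by
        rw [show (a+1+0+2) = (a+1+1)+1 by ring]
        simp [Nat.choose_succ_self_right]
      have h3 : (2*(a+1+0)+3)‼ = (2*(a+1)+1+2) * (2*(a+1)+1)‼ := by
        rw [show 2*(a+1+0)+3 = (2*(a+1)+1)+2 by ring, Nat.doubleFactorial_add_two]
      rw [h2, h3, show (2*0+1)‼ = 1 from rfl, mul_one]
      calc (2*(a+1)+1)‼ * (a+3) ≤ (2*(a+1)+1)‼ * (2*(a+1)+1+2) :=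
            Nat.mul_le_mul_left _ (by omega)
        _ = (2*(a+1)+1+2) * (2*(a+1)+1)‼ := mul_comm _ _
    | succ b ihb =>
      have hp : (a+1+(b+1)+2).choose (a+1+1) =
          (a+1+(b+1)+1).choose (a+1) + (a+1+(b+1)+1).choose (a+1+1) :=
        Nat.choose_succ_succ' _ _
      have e1 : (2*(a+1)+1)‼ = (2*a+3) * (2*a+1)‼ := by
        rw [show 2*(a+1)+1 = (2*a+1)+2 by ring, Nat.doubleFactorial_add_two]
      have e2 : (2*(b+1)+1)‼ = (2*b+3) * (2*b+1)‼ := by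
        rw [show 2*(b+1)+1 = (2*b+1)+2 by ring, Nat.doubleFactorial_add_two]
      have e3 : (2*(a+1+(b+1))+3)‼ = (2*(a+b)+5+2) * (2*(a+b)+5)‼ := by
        rw [show 2*(a+1+(b+1))+3 = (2*(a+b)+5)+2 by ring, Nat.doubleFactorial_add_two]
      have h1 : (2*a+1)‼ * (2*(b+1)+1)‼ * ((a+(b+1)+2).choose (a+1)) ≤ (2*(a+(b+1))+3)‼ :=
        iha (b+1)
      have h2 : (2*(a+1)+1)‼ * (2*b+1)‼ * ((a+1+b+2).choose (a+1+1)) ≤ (2*(a+1+b)+3)‼ := ihb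
      have e4 : 2*(a+(b+1))+3 = 2*(a+b)+5 := by ring
      have e5 : 2*(a+1+b)+3 = 2*(a+b)+5 := by ring
      have e6 : (a+(b+1)+2) = a+1+(b+1)+1 := by ring
      have e7 : (a+1+b+2) = a+1+(b+1)+1 := by ring
      rw [e4, e6] at h1
      rw [e5, e7] at h2
      rw [hp, e1, e2, e3, Nat.mul_add]
      have t1 : (2*a+3) * (2*a+1)‼ * ((2*b+3) * (2*b+1)‼) * ((a+1+(b+1)+1).choose (a+1)) ≤
          (2*a+3) * ((2*(a+b)+5)‼) := by
        calc (2*a+3) * (2*a+1)‼ * ((2*b+3) * (2*b+1)‼) * ((a+1+(b+1)+1).choose (a+1))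
            = (2*a+3) * ((2*a+1)‼ * ((2*b+3) * (2*b+1)‼) * ((a+1+(b+1)+1).choose (a+1))) := by ring
          _ ≤ _ := Nat.mul_le_mul_left _ (by rw [← e2]; exact h1)
      have t2 : (2*a+3) * (2*a+1)‼ * ((2*b+3) * (2*b+1)‼) * ((a+1+(b+1)+1).choose (a+1+1)) ≤
          (2*b+3) * ((2*(a+b)+5)‼) := by
        calc (2*a+3) * (2*a+1)‼ * ((2*b+3) * (2*b+1)‼) * ((a+1+(b+1)+1).choose (a+1+1))
            = (2*b+3) * (((2*a+3) * (2*a+1)‼) * (2*b+1)‼ * ((a+1+(b+1)+1).choose (a+1+1))) := by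
              ring
          _ ≤ _ := Nat.mul_le_mul_left _ (by rw [← e1]; exact h2)
      calc _ ≤ (2*a+3) * ((2*(a+b)+5)‼) + (2*b+3) * ((2*(a+b)+5)‼) := Nat.add_le_add t1 t2
        _ ≤ (2*(a+b)+5+2) * (2*(a+b)+5)‼ := by
            rw [← Nat.add_mul]; exact Nat.mul_le_mul_right _ (by omega)

lemma choose_mono_aux (n k : ℕ) : ∀ j, k ≤ j → 2*j ≤ n → n.choose k ≤ n.choose j := by
  intro j
  induction j with
  | zero => intro h _; interval_cases k; rfl
  | succ j ih =>
    intro hk hj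
    rcases Nat.lt_or_ge k (j+1) with h | h
    · calc n.choose k ≤ n.choose j := ih (by omega) (by omega)
        _ ≤ n.choose (j+1) := Nat.choose_le_succ_of_lt_half_left (by omega)
    · have : k = j+1 := by omega
      rw [this]
lemma choose_mono (n k j : ℕ) (hk : k ≤ j) (hj : j + k ≤ n) : n.choose k ≤ n.choose j := by
  rcases le_or_gt (2*j) n with h | h
  · exact choose_mono_aux n k j hk h
  · have h1 : n.choose k ≤ n.choose (n - j) := choose_mono_aux n k (n-j) (by omega) (by omega)
    rwa [Nat.choose_symm (by omega : j ≤ n)] at h1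
lemma two_choose_two : ∀ n : ℕ, 2 * (n+2).choose 2 = (n+2)*(n+1) := by
  intro n
  induction n with
  | zero => rfl
  | succ n ih =>
    rw [show n+1+2 = (n+2)+1 by ring, Nat.choose_succ_succ' (n+2) 1, Nat.mul_add, ih,
      Nat.choose_one_right]
    ring
lemma six_choose_three : ∀ n : ℕ, 6 * (n+3).choose 3 = (n+3)*(n+2)*(n+1) := by
  intro n
  induction n with
  | zero => rfl
  | succ n ih =>
    rw [show n+1+3 = (n+3)+1 by ring, Nat.choose_succ_succ' (n+3) 2, Nat.mul_add, ih,
      show (6:ℕ) = 3*2 by rfl, Nat.mul_assoc, two_choose_two]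
    ring

lemma X_eq (n : ℕ) : X (n+2) = 2 * (n + 1) * X (n + 1) +
    ∑ j ∈ Finset.Icc 2 n, (j - 1) * X j * X (n + 2 - j) := by
  rw [X]; rw [Finset.sum_attach (Finset.Icc 2 n) (fun j => (j - 1) * X j * X (n + 2 - j))]

lemma X2 : X 2 = 2 := by simp [X_eq, X]
lemma X3 : X 3 = 8 := by simp [X_eq, X, Finset.sum_Icc_succ_top]
lemma X4 : X 4 = 52 := by simp [X_eq, X, Finset.sum_Icc_succ_top]
lemma X5 : X 5 = 464 := by simp [X_eq, X, Finset.sum_Icc_succ_top]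
lemma X6 : X 6 = 5184 := by simp [X_eq, X, Finset.sum_Icc_succ_top]

open Nat in
lemma X_lb : ∀ n : ℕ, 2 * (2*n-1)‼ ≤ 5 * X n := by
  intro n
  induction n using Nat.strong_induction_on with
  | _ n ih =>
    rcases Nat.lt_or_ge n 7 with h7 | h7
    · interval_cases n <;>
        simp [X, X2, X3, X4, X5, X6, Nat.doubleFactorial] <;> decide
    · obtain ⟨m, rfl⟩ : ∃ m, n = m + 7 := ⟨n - 7, by omega⟩
      -- the four extracted summands
      have hsub : (insert 2 (insert 3 (insert (m+4) {m+5})) : Finset ℕ) ⊆ Finset.Icc 2 (m+5) := by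
        intro x hx
        simp only [Finset.mem_insert, Finset.mem_singleton] at hx
        rw [Finset.mem_Icc]; omega
      have hsum4 : ∑ j ∈ (insert 2 (insert 3 (insert (m+4) ({m+5} : Finset ℕ)))),
          (j - 1) * X j * X (m + 5 + 2 - j) =
          2 * X (m+5) + 16 * X (m+4) + ((m+3) * X (m+4) * 8 + (m+4) * X (m+5) * 2) := by
        rw [Finset.sum_insert (by simp only [Finset.mem_insert, Finset.mem_singleton]; omega),
          Finset.sum_insert (by simp only [Finset.mem_insert, Finset.mem_singleton]; omega),
          Finset.sum_insert (by simp only [Finset.mem_singleton]; omega), Finset.sum_singleton]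
        have e1 : m + 5 + 2 - (m+4) = 3 := by omega
        have e2 : m + 5 + 2 - (m+5) = 2 := by omega
        have e3 : m + 5 + 2 - 2 = m + 5 := by omega
        have e4 : m + 5 + 2 - 3 = m + 4 := by omega
        have e5 : m + 5 - 1 = m + 4 := by omega
        have e6 : m + 4 - 1 = m + 3 := by omega
        rw [e1, e2, e3, e4, e5, e6, X2, X3]
        ring
      have hsum : 2*(m+6) * X (m+6) + ((2*m+10) * X (m+5) + (8*m+40) * X (m+4)) ≤ X (m+7) := by
        conv_rhs => rw [show m+7 = (m+5)+2 by ring, X_eq]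
        have hle := Finset.sum_le_sum_of_subset (f := fun j => (j - 1) * X j * X (m + 5 + 2 - j))
          hsub
        rw [hsum4] at hle
        rw [show m+5+1 = m+6 by ring]
        calc 2*(m+6) * X (m+6) + ((2*m+10) * X (m+5) + (8*m+40) * X (m+4))
            = 2*(m+6) * X (m+6) +
              (2 * X (m+5) + 16 * X (m+4) + ((m+3) * X (m+4) * 8 + (m+4) * X (m+5) * 2)) := by
              ring
          _ ≤ _ := Nat.add_le_add_left hle _
      -- double factorial expansions
      set d := (2*m+7)‼ with hd
      have d9 : (2*m+9)‼ = (2*m+9) * d := by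
        rw [show 2*m+9 = (2*m+7)+2 by ring, Nat.doubleFactorial_add_two]
      have d11 : (2*m+11)‼ = (2*m+11) * ((2*m+9) * d) := by
        rw [show 2*m+11 = (2*m+9)+2 by ring, Nat.doubleFactorial_add_two, d9]
      have d13 : (2*m+13)‼ = (2*m+13) * ((2*m+11) * ((2*m+9) * d)) := by
        rw [show 2*m+13 = (2*m+11)+2 by ring, Nat.doubleFactorial_add_two, d11]
      have a1 : 2*((2*m+11) * ((2*m+9) * d)) ≤ 5 * X (m+6) := by
        have := ih (m+6) (by omega)
        rwa [show 2*(m+6)-1 = 2*m+11 by omega, d11] at this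
      have a2 : 2*((2*m+9) * d) ≤ 5 * X (m+5) := by
        have := ih (m+5) (by omega)
        rwa [show 2*(m+5)-1 = 2*m+9 by omega, d9] at this
      have a3 : 2*d ≤ 5 * X (m+4) := by
        have := ih (m+4) (by omega)
        rwa [show 2*(m+4)-1 = 2*m+7 by omega] at this
      rw [show 2*(m+7)-1 = 2*m+13 by omega, d13]
      calc 2*((2*m+13) * ((2*m+11) * ((2*m+9) * d)))
          ≤ 2*((2*m+13) * ((2*m+11) * ((2*m+9) * d))) + (12*m+62)*d := Nat.le_add_right _ _
        _ = 2*(m+6) * (2*((2*m+11) * ((2*m+9) * d))) +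
            ((2*m+10) * (2*((2*m+9) * d)) + (8*m+40) * (2*d)) := by ring
        _ ≤ 2*(m+6) * (5 * X (m+6)) + ((2*m+10) * (5 * X (m+5)) + (8*m+40) * (5 * X (m+4))) :=
            Nat.add_le_add (Nat.mul_le_mul_left _ a1)
              (Nat.add_le_add (Nat.mul_le_mul_left _ a2) (Nat.mul_le_mul_left _ a3))
        _ = 5 * (2*(m+6) * X (m+6) + ((2*m+10) * X (m+5) + (8*m+40) * X (m+4))) := by ring
        _ ≤ 5 * X (m+7) := Nat.mul_le_mul_left _ hsum

open Nat in
lemma Y_ub (m : ℕ) : (m+7) * Y (m+7) ≤ 50 * X (m+7) := by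
  set F := (2*m+13)‼ with hF
  set t : ℕ → ℕ := fun j => (2 * (m+7) - 2 * j - 1)‼ * (2 * j - 1)‼ with ht
  have hYdef : Y (m+7) = (m+7) * ∑ j ∈ Finset.Icc 2 (m+5), t j := rfl
  have hT : ∀ j ∈ Finset.Icc 2 (m+5), t j * ((m+7).choose j) ≤ F := by
    intro j hj
    rw [Finset.mem_Icc] at hj
    have h := dfkey (j-1) (m+6-j)
    rw [show 2*(j-1)+1 = 2*j-1 by omega, show 2*(m+6-j)+1 = 2*(m+7)-2*j-1 by omega,
      show (j-1)+(m+6-j)+2 = m+7 by omega, show (j-1)+1 = j by omega,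
      show 2*((j-1)+(m+6-j))+3 = 2*m+13 by omega] at h
    calc t j * ((m+7).choose j) = (2*j-1)‼ * (2*(m+7)-2*j-1)‼ * ((m+7).choose j) := by
          rw [ht]; ring
      _ ≤ F := h
  have h2j : ∀ j ∈ Finset.Icc 2 (m+5), t j * ((m+7)*(m+6)) ≤ 2 * F := by
    intro j hj
    have hmem := hj
    rw [Finset.mem_Icc] at hmem
    have hc : (m+7).choose 2 ≤ (m+7).choose j := choose_mono _ 2 j (by omega) (by omega)
    calc t j * ((m+7)*(m+6)) = 2 * (t j * ((m+7).choose 2)) := by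
          rw [show (m+7)*(m+6) = 2 * ((m+5+2).choose 2) by rw [two_choose_two],
            show m+5+2 = m+7 by ring]
          ring
      _ ≤ 2 * (t j * ((m+7).choose j)) :=
          Nat.mul_le_mul_left _ (Nat.mul_le_mul_left _ hc)
      _ ≤ 2 * F := Nat.mul_le_mul_left _ (hT j hj)
  have h3j : ∀ j ∈ Finset.Icc 3 (m+4), t j * ((m+7)*(m+6)*(m+5)) ≤ 6 * F := by
    intro j hj
    rw [Finset.mem_Icc] at hj
    have hj' : j ∈ Finset.Icc 2 (m+5) := by rw [Finset.mem_Icc]; omega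
    have hc : (m+7).choose 3 ≤ (m+7).choose j := choose_mono _ 3 j (by omega) (by omega)
    calc t j * ((m+7)*(m+6)*(m+5)) = 6 * (t j * ((m+7).choose 3)) := by
          rw [show (m+7)*(m+6)*(m+5) = 6 * ((m+4+3).choose 3) by rw [six_choose_three],
            show m+4+3 = m+7 by ring]
          ring
      _ ≤ 6 * (t j * ((m+7).choose j)) :=
          Nat.mul_le_mul_left _ (Nat.mul_le_mul_left _ hc)
      _ ≤ 6 * F := Nat.mul_le_mul_left _ (hT j hj')
  have hsplit : Finset.Icc 2 (m+5) = insert 2 (insert (m+5) (Finset.Icc 3 (m+4))) := by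
    ext x
    simp only [Finset.mem_Icc, Finset.mem_insert]
    omega
  have hU : (∑ j ∈ Finset.Icc 2 (m+5), t j) * ((m+7)*(m+6)*(m+5)) ≤ (10*m+32) * F := by
    rw [Finset.sum_mul, hsplit,
      Finset.sum_insert (by simp only [Finset.mem_insert, Finset.mem_Icc]; omega),
      Finset.sum_insert (by simp only [Finset.mem_Icc]; omega)]
    have m1 : (2:ℕ) ∈ Finset.Icc 2 (m+5) := by rw [Finset.mem_Icc]; omega
    have m2 : (m+5:ℕ) ∈ Finset.Icc 2 (m+5) := by rw [Finset.mem_Icc]; omega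
    have b1 : t 2 * ((m+7)*(m+6)*(m+5)) ≤ 2*F*(m+5) := by
      calc t 2 * ((m+7)*(m+6)*(m+5)) = t 2 * ((m+7)*(m+6)) * (m+5) := by ring
        _ ≤ 2*F*(m+5) := Nat.mul_le_mul_right _ (h2j 2 m1)
    have b2 : t (m+5) * ((m+7)*(m+6)*(m+5)) ≤ 2*F*(m+5) := by
      calc t (m+5) * ((m+7)*(m+6)*(m+5)) = t (m+5) * ((m+7)*(m+6)) * (m+5) := by ring
        _ ≤ 2*F*(m+5) := Nat.mul_le_mul_right _ (h2j (m+5) m2)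
    have b3 : ∑ j ∈ Finset.Icc 3 (m+4), t j * ((m+7)*(m+6)*(m+5)) ≤ (m+2) * (6*F) := by
      have := Finset.sum_le_card_nsmul (Finset.Icc 3 (m+4))
        (fun j => t j * ((m+7)*(m+6)*(m+5))) (6*F) h3j
      rwa [Nat.card_Icc, show m+4+1-3 = m+2 by omega, smul_eq_mul] at this
    calc t 2 * ((m+7)*(m+6)*(m+5)) + (t (m+5) * ((m+7)*(m+6)*(m+5)) +
          ∑ j ∈ Finset.Icc 3 (m+4), t j * ((m+7)*(m+6)*(m+5)))
        ≤ 2*F*(m+5) + (2*F*(m+5) + (m+2) * (6*F)) :=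
          Nat.add_le_add b1 (Nat.add_le_add b2 b3)
      _ = (10*m+32) * F := by ring
  -- conclude
  have hX : 2 * F ≤ 5 * X (m+7) := by
    have := X_lb (m+7)
    rwa [show 2*(m+7)-1 = 2*m+13 by omega] at this
  have key2 : ((m+7) * Y (m+7)) * ((m+6)*(m+5)) ≤ (50 * X (m+7)) * ((m+6)*(m+5)) := by
    calc ((m+7) * Y (m+7)) * ((m+6)*(m+5))
        = (m+7) * ((∑ j ∈ Finset.Icc 2 (m+5), t j) * ((m+7)*(m+6)*(m+5))) := by
          rw [hYdef]; ring
      _ ≤ (m+7) * ((10*m+32) * F) := Nat.mul_le_mul_left _ hU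
      _ = ((m+7) * (5*m+16)) * (2 * F) := by ring
      _ ≤ ((m+7) * (5*m+16)) * (5 * X (m+7)) := Nat.mul_le_mul_left _ hX
      _ ≤ (50 * X (m+7)) * ((m+6)*(m+5)) := by
          calc ((m+7) * (5*m+16)) * (5 * X (m+7))
              ≤ ((m+7) * (5*m+16) + (5*m^2+59*m+188)) * (5 * X (m+7)) :=
                Nat.mul_le_mul_right _ (Nat.le_add_right _ _)
            _ = (50 * X (m+7)) * ((m+6)*(m+5)) := by ring
  exact Nat.le_of_mul_le_mul_right key2 (by positivity)

/-- `Y_n / X_n → 0` as `n → ∞`. -/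
theorem Y_div_X_tendsto_zero :
    Filter.Tendsto (fun n : ℕ => (Y n : ℝ) / (X n : ℝ)) Filter.atTop (nhds 0) := by
  have hX_pos : ∀ n, 0 < X n := by
    intro n
    have h := X_lb n
    have := Nat.doubleFactorial_pos (2*n-1)
    omega
  apply squeeze_zero' (g := fun n : ℕ => 50 / (n : ℝ))
  · filter_upwards with n
    positivity
  · filter_upwards [Filter.eventually_ge_atTop 7] with n hn
    obtain ⟨m, rfl⟩ : ∃ m, n = m + 7 := ⟨n - 7, by omega⟩
    have h := Y_ub m
    rw [div_le_div_iff₀ (by exact_mod_cast hX_pos (m+7)) (by positivity)]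
    have h' : (((m+7) * Y (m+7) : ℕ) : ℝ) ≤ ((50 * X (m+7) : ℕ) : ℝ) := by exact_mod_cast h
    push_cast at h' ⊢
    linarith
  · exact tendsto_const_div_atTop_nhds_zero_nat 50
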